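/- arXiv:1609.08353 — 6 statements merged into one kernel-verified Lean document; each statement's English description precedes it below -/
import Mathlib

section
/- Let A_{n,t} be the number of sequences a_1, ..., a_{2n} of nonnegative integers with a_1 = 1, a_{2n} = 0, |a_i - a_{i+1}| = 1 for all i, and a_i ≤ t for all i. Then A_{n,t} = Σ_{j≥0} [ binomial(2n, n - j(t+2)) - binomial(2n, n - j(t+2) - 1) - binomial(2n, n - j(t+2) - t - 1) + binomial(2n, n - (j+1)(t+2)) ], where binomial coefficients with negative lower index are zero. -/
open Finset Real Filter

/-- A Dyck-path sequence `a_1, …, a_{2n}` (with `a 0 = 0` and zero padding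
beyond index `2n` so that the set of such functions is finite):
`a 1 = 1`, `a (2n) = 0`, and consecutive values differ by exactly 1. -/
def IsDyckSeq (n : ℕ) (a : ℕ → ℕ) : Prop :=
  a 1 = 1 ∧ a (2*n) = 0 ∧
  (∀ i, 1 ≤ i → i < 2*n → (a (i+1) = a i + 1 ∨ a i = a (i+1) + 1)) ∧
  a 0 = 0 ∧ ∀ i, 2*n < i → a i = 0

/-- `A n t`: number of Dyck-path sequences of semilength `n` of height at most `t`,
with the convention `A 0 t = 1`. -/
noncomputable def A (n t : ℕ) : ℕ :=
  if n = 0 then 1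
  else Nat.card {a : ℕ → ℕ // IsDyckSeq n a ∧ ∀ i, a i ≤ t}

/-- `B n k`: number of Dyck-path sequences of semilength `n` of height at least `k`,
with the conventions `B 0 0 = 1`, `B 0 k = 0` for `k ≥ 1`. -/
noncomputable def B (n k : ℕ) : ℕ :=
  if n = 0 then (if k = 0 then 1 else 0)
  else Nat.card {a : ℕ → ℕ // IsDyckSeq n a ∧ ∃ i, k ≤ a i}

/-- The `n`-th Catalan number `C_n = (1/(n+1)) * binomial(2n, n)`. -/
def C (n : ℕ) : ℕ := (2*n).choose n / (n + 1)

/-- Binomial coefficient with integer lower index, zero when negative. -/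
def chooseZ (m : ℕ) (r : ℤ) : ℕ := if 0 ≤ r then m.choose r.toNat else 0

/-!
Walks from `x` to `0` inside `{0, …, t}` are the free `±1` walks that never hit the walls `-1`
and `t + 1`. Their number `S m x` satisfies `S (m + 1) x = S m (x - 1) + S m (x + 1)` with
`S m (-1) = S m (t + 1) = 0`. By the method of images, so does the alternating sum
`∑ₖ W m (x - 2k(t + 2)) - W m (-2 - x - 2k(t + 2))` of free walk counts `W`: it is odd under the
reflection in `-1` and, the two reflections generating translations by `2(t + 2)`, also under the
reflection in `t + 1`. Both agree at `m = 0`, hence for all `m`. At `m = 2n`, `x = 0` the image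
sum is a sum of binomial coefficients, which the symmetry `C(2n, n + r) = C(2n, n - r)` folds
into the stated one.
-/

open Function

/-- A walk `a 0 = x, a 1, …, a m = 0` with `±1` steps inside `{0, …, t}`, padded by zeros after
time `m` so that there are only finitely many. -/
structure IsStripWalk (t m : ℕ) (x : ℤ) (a : ℕ → ℕ) : Prop where
  start : (a 0 : ℤ) = x
  finish : a m = 0
  step : ∀ i < m, a (i + 1) = a i + 1 ∨ a i = a (i + 1) + 1
  le_height : ∀ i, a i ≤ t
  eq_zero_of_lt : ∀ i, m < i → a i = 0

abbrev StripWalk (t m : ℕ) (x : ℤ) := {a : ℕ → ℕ // IsStripWalk t m x a}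

noncomputable def stripCount (t m : ℕ) (x : ℤ) : ℕ := Nat.card (StripWalk t m x)

section StripWalk

variable {t m : ℕ}

instance (x : ℤ) : Finite (StripWalk t m x) := by
  refine Finite.of_injective
    (fun a (i : Fin (m + 1)) => (⟨a.1 i, Nat.lt_succ_of_le (a.2.le_height i)⟩ : Fin (t + 1))) ?_
  intro a b hab
  ext i
  rcases lt_or_ge i (m + 1) with hi | hi
  · simpa using congrFun hab ⟨i, hi⟩
  · rw [a.2.eq_zero_of_lt i hi, b.2.eq_zero_of_lt i hi]

lemma IsStripWalk.tail {x : ℤ} {a : ℕ → ℕ} (h : IsStripWalk t (m + 1) x a) :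
    IsStripWalk t m (x - 1) (Stream'.tail a) ∨ IsStripWalk t m (x + 1) (Stream'.tail a) := by
  have hwalk : IsStripWalk t m (a 1) (Stream'.tail a) :=
    ⟨rfl, h.finish, fun i hi => h.step (i + 1) (by omega), fun i => h.le_height (i + 1),
      fun i hi => h.eq_zero_of_lt (i + 1) (by omega)⟩
  have hx := h.start
  rcases h.step 0 m.succ_pos with h1 | h1 <;> simp only [zero_add] at h1
  · exact .inr (by rwa [show x + 1 = a 1 by omega])
  · exact .inl (by rwa [show x - 1 = a 1 by omega])

lemma IsStripWalk.cons {y : ℤ} {b : ℕ → ℕ} (h : IsStripWalk t m y b) {x : ℕ} (hx : x ≤ t)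
    (hy : y = x - 1 ∨ y = x + 1) : IsStripWalk t (m + 1) x (Stream'.cons x b) where
  start := rfl
  finish := h.finish
  step i hi := by
    rcases i with _ | i
    · have := h.start
      change b 0 = x + 1 ∨ x = b 0 + 1
      omega
    · exact h.step i (by omega)
  le_height i := by
    rcases i with _ | i
    · exact hx
    · exact h.le_height i
  eq_zero_of_lt i hi := by
    rcases i with _ | i
    · omega
    · exact h.eq_zero_of_lt i (by omega)

lemma stripCount_zero (x : ℤ) : stripCount t 0 x = if x = 0 then 1 else 0 := by
  split_ifs with hx
  · refine Nat.card_eq_one_iff_exists.2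
      ⟨⟨0, by simp [hx], rfl, by simp, by simp, fun _ _ => rfl⟩, fun a => ?_⟩
    ext i
    rcases i with _ | i
    · exact a.2.finish
    · exact a.2.eq_zero_of_lt _ i.succ_pos
  · have : IsEmpty (StripWalk t 0 x) := ⟨fun a => hx (by simpa [a.2.finish] using a.2.start.symm)⟩
    exact Nat.card_of_isEmpty

lemma stripCount_neg_one : stripCount t m (-1) = 0 :=
  have : IsEmpty (StripWalk t m (-1)) := ⟨fun a => by have := a.2.start; omega⟩
  Nat.card_of_isEmpty

lemma stripCount_height_add_one : stripCount t m (t + 1) = 0 :=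
  have : IsEmpty (StripWalk t m (t + 1)) := ⟨fun a => by
    have := a.2.start; have := a.2.le_height 0; omega⟩
  Nat.card_of_isEmpty

def stripWalkSuccEquiv (x : ℕ) (hx : x ≤ t) :
    StripWalk t (m + 1) x ≃ {b // IsStripWalk t m (x - 1) b ∨ IsStripWalk t m (x + 1) b} where
  toFun a := ⟨Stream'.tail a.1, a.2.tail⟩
  invFun b := ⟨Stream'.cons x b.1, b.2.elim (·.cons hx (.inl rfl)) (·.cons hx (.inr rfl))⟩
  left_inv := fun ⟨a, ha⟩ => Subtype.ext <| by
    have h0 : Stream'.head a = x := by exact_mod_cast ha.start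
    exact h0 ▸ Stream'.eta a
  right_inv b := Subtype.ext (Stream'.tail_cons x b.1)

lemma stripCount_succ {x : ℤ} (hx0 : 0 ≤ x) (hxt : x ≤ t) :
    stripCount t (m + 1) x = stripCount t m (x - 1) + stripCount t m (x + 1) := by
  lift x to ℕ using hx0
  have hdisj : Disjoint (IsStripWalk t m (x - 1)) (IsStripWalk t m (x + 1)) := by
    rw [Pi.disjoint_iff]
    exact fun b => Prop.disjoint_iff.2 fun ⟨h1, h2⟩ => by have := h1.start; have := h2.start; omega
  classical
  rw [stripCount, Nat.card_congr ((stripWalkSuccEquiv x (by omega)).trans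
    (subtypeOrEquiv _ _ hdisj)), Nat.card_sum]
  rfl

end StripWalk

lemma chooseZ_of_neg {m : ℕ} {r : ℤ} (h : r < 0) : chooseZ m r = 0 := by
  simp [chooseZ, not_le.2 h]

lemma chooseZ_of_lt {m : ℕ} {r : ℤ} (h : (m : ℤ) < r) : chooseZ m r = 0 := by
  rw [chooseZ, if_pos (by omega)]
  exact Nat.choose_eq_zero_of_lt (by omega)

lemma chooseZ_succ (m : ℕ) (r : ℤ) : chooseZ (m + 1) r = chooseZ m (r - 1) + chooseZ m r := by
  rcases lt_trichotomy r 0 with h | rfl | h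
  · rw [chooseZ_of_neg h, chooseZ_of_neg h, chooseZ_of_neg (by omega)]
  · simp [chooseZ]
  · rw [chooseZ, chooseZ, chooseZ, if_pos h.le, if_pos h.le, if_pos (by omega),
      show r.toNat = (r - 1).toNat + 1 by omega, Nat.choose_succ_succ']

lemma chooseZ_two_mul_add (n : ℕ) (r : ℤ) : chooseZ (2 * n) (n + r) = chooseZ (2 * n) (n - r) := by
  by_cases h₁ : 0 ≤ (n : ℤ) + r
  · by_cases h₂ : 0 ≤ (n : ℤ) - r
    · rw [chooseZ, chooseZ, if_pos h₁, if_pos h₂, show (n - r).toNat = 2 * n - (n + r).toNat by omega,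
        Nat.choose_symm (by omega)]
    · rw [chooseZ_of_lt (by omega), chooseZ_of_neg (by omega)]
  · rw [chooseZ_of_neg (by omega), chooseZ_of_lt (by omega)]

/-- The number of `±1` walks of length `m` with displacement `y`. -/
def freeWalks (m : ℕ) (y : ℤ) : ℤ := if (m + y) % 2 = 0 then chooseZ m ((m + y) / 2) else 0

lemma freeWalks_succ (m : ℕ) (y : ℤ) :
    freeWalks (m + 1) y = freeWalks m (y - 1) + freeWalks m (y + 1) := by
  unfold freeWalks
  push_cast
  by_cases h : ((m : ℤ) + 1 + y) % 2 = 0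
  · rw [if_pos h, if_pos (by omega), if_pos (by omega), chooseZ_succ, Nat.cast_add]
    congr 3 <;> omega
  · rw [if_neg h, if_neg (by omega), if_neg (by omega), add_zero]

lemma freeWalks_of_lt_abs {m : ℕ} {y : ℤ} (h : m < |y|) : freeWalks m y = 0 := by
  rw [freeWalks]
  split_ifs
  · rcases lt_abs.1 h with h | h
    · rw [chooseZ_of_lt (by omega), Nat.cast_zero]
    · rw [chooseZ_of_neg (by omega), Nat.cast_zero]
  · rfl

lemma freeWalks_zero (y : ℤ) : freeWalks 0 y = if y = 0 then 1 else 0 := by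
  rcases eq_or_ne y 0 with rfl | hy
  · rfl
  · rw [if_neg hy, freeWalks_of_lt_abs (by simpa using hy)]

lemma freeWalks_two_mul (n : ℕ) (s : ℤ) : freeWalks (2 * n) (2 * s) = chooseZ (2 * n) (n + s) := by
  rw [freeWalks, if_pos (by omega)]
  congr 2
  omega

lemma hasFiniteSupport_freeWalks (m : ℕ) : HasFiniteSupport (freeWalks m) :=
  (Set.finite_Icc (-(m : ℤ)) m).subset fun _ hy =>
    abs_le.1 (not_lt.1 fun h => hy (freeWalks_of_lt_abs h))

lemma hasFiniteSupport_freeWalks_sub_mul (m : ℕ) (c : ℤ) {p : ℤ} (hp : p ≠ 0) :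
    HasFiniteSupport fun k : ℤ => freeWalks m (c - k * p) :=
  (hasFiniteSupport_freeWalks m).fun_comp_of_injective
    ((sub_right_injective).comp (mul_left_injective₀ hp))

def imageTerm (t m : ℕ) (x k : ℤ) : ℤ :=
  freeWalks m (x - k * (2 * (t + 2))) - freeWalks m (-2 - x - k * (2 * (t + 2)))

noncomputable def imageSum (t m : ℕ) (x : ℤ) : ℤ := ∑ᶠ k, imageTerm t m x k

section imageSum

variable (t : ℕ)

lemma hasFiniteSupport_imageTerm (m : ℕ) (x : ℤ) : HasFiniteSupport (imageTerm t m x) :=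
  (hasFiniteSupport_freeWalks_sub_mul m x (by omega)).sub
    (hasFiniteSupport_freeWalks_sub_mul m (-2 - x) (by omega))

lemma imageSum_succ (m : ℕ) (x : ℤ) :
    imageSum t (m + 1) x = imageSum t m (x - 1) + imageSum t m (x + 1) := by
  rw [imageSum, imageSum, imageSum,
    ← finsum_add_distrib (hasFiniteSupport_imageTerm t m _) (hasFiniteSupport_imageTerm t m _)]
  refine finsum_congr fun k => ?_
  simp only [imageTerm, freeWalks_succ]
  ring_nf

lemma imageSum_neg_one (m : ℕ) : imageSum t m (-1) = 0 :=
  finsum_eq_zero_of_forall_eq_zero fun k => by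
    rw [imageTerm, show -2 - -1 = (-1 : ℤ) by norm_num, sub_self]

lemma imageSum_height_add_one (m : ℕ) : imageSum t m (t + 1) = 0 := by
  have hf := hasFiniteSupport_freeWalks_sub_mul m (t + 1) (p := 2 * (t + 2)) (by omega)
  have hshift : ∀ k : ℤ, imageTerm t m (t + 1) k =
      freeWalks m (t + 1 - k * (2 * (t + 2))) - freeWalks m (t + 1 - (k + 1) * (2 * (t + 2))) :=
    fun k => by rw [imageTerm]; congr 2; ring
  rw [imageSum, finsum_congr hshift,
    finsum_sub_distrib hf (hf.fun_comp_of_injective (add_left_injective 1)), sub_eq_zero]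
  exact (finsum_comp_equiv (Equiv.addRight 1)).symm

lemma imageSum_zero {x : ℤ} (hx0 : 0 ≤ x) (hxt : x ≤ t) :
    imageSum t 0 x = if x = 0 then 1 else 0 := by
  rw [imageSum, finsum_eq_single _ 0]
  · rw [imageTerm, zero_mul, sub_zero, sub_zero, freeWalks_zero, freeWalks_zero,
      if_neg (show -2 - x ≠ 0 by omega), sub_zero]
  · intro k hk
    have hkp : 2 * (t + 2 : ℤ) ≤ |k * (2 * (t + 2))| := by
      rw [abs_mul, abs_of_pos (by positivity : (0 : ℤ) < 2 * (t + 2))]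
      exact le_mul_of_one_le_left (by positivity) (Int.one_le_abs hk)
    rw [le_abs'] at hkp
    rw [imageTerm, freeWalks_zero, freeWalks_zero, if_neg (by omega), if_neg (by omega), sub_zero]

end imageSum

lemma stripCount_eq_of_recurrence {t : ℕ} (F : ℕ → ℤ → ℤ)
    (hzero : ∀ x : ℤ, 0 ≤ x → x ≤ t → F 0 x = if x = 0 then 1 else 0)
    (hbot : ∀ m, F m (-1) = 0) (htop : ∀ m, F m (t + 1) = 0)
    (hsucc : ∀ m x, F (m + 1) x = F m (x - 1) + F m (x + 1)) (m : ℕ) :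
    ∀ x : ℤ, -1 ≤ x → x ≤ t + 1 → (stripCount t m x : ℤ) = F m x := by
  have hwall : ∀ m (x : ℤ), x = -1 ∨ x = t + 1 → (stripCount t m x : ℤ) = F m x := by
    rintro m x (rfl | rfl)
    · rw [stripCount_neg_one, hbot, Nat.cast_zero]
    · rw [stripCount_height_add_one, htop, Nat.cast_zero]
  induction m with
  | zero =>
    intro x hx₁ hx₂
    by_cases hx : 0 ≤ x ∧ x ≤ t
    · rw [stripCount_zero, hzero x hx.1 hx.2]
      split_ifs <;> rfl
    · exact hwall 0 x (by omega)
  | succ m ih =>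
    intro x hx₁ hx₂
    by_cases hx : 0 ≤ x ∧ x ≤ t
    · rw [stripCount_succ hx.1 hx.2, hsucc, Nat.cast_add, ih (x - 1) (by omega) (by omega),
        ih (x + 1) (by omega) (by omega)]
    · exact hwall (m + 1) x (by omega)

lemma stripCount_eq_imageSum (t m : ℕ) {x : ℤ} (hx₁ : -1 ≤ x) (hx₂ : x ≤ t + 1) :
    (stripCount t m x : ℤ) = imageSum t m x :=
  stripCount_eq_of_recurrence (imageSum t) (fun _ => imageSum_zero t) (imageSum_neg_one t)
    (imageSum_height_add_one t) (imageSum_succ t) m x hx₁ hx₂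

lemma finsum_int_eq_sum_range {M : Type*} [AddCommMonoid M] (f : ℤ → M) (N : ℕ)
    (hpos : ∀ j : ℕ, N ≤ j → f j = 0) (hneg : ∀ j : ℕ, N ≤ j → f (-(j + 1)) = 0) :
    ∑ᶠ k, f k = ∑ j ∈ range N, (f j + f (-(j + 1))) := by
  rw [← finsum_comp_equiv Equiv.intEquivNatSumNat.symm,
    finsum_eq_sum_of_support_subset (s := (range N).disjSum (range N)), sum_disjSum,
    ← sum_add_distrib]
  · rfl
  · intro s hs
    by_contra hN
    refine hs ?_
    rcases s with j | j <;>
      simp only [mem_coe, inl_mem_disjSum, inr_mem_disjSum, mem_range, not_lt] at hN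
    · exact hpos j hN
    · show f (Int.negSucc j) = 0
      rw [Int.negSucc_eq]
      exact hneg j hN

lemma imageSum_two_mul_zero (t n : ℕ) :
    imageSum t (2 * n) 0 =
      ∑ j ∈ range (n + 1),
        ((chooseZ (2 * n) (n - j * (t + 2)) : ℤ) - chooseZ (2 * n) (n - j * (t + 2) - 1)
          - chooseZ (2 * n) (n - j * (t + 2) - t - 1) + chooseZ (2 * n) (n - (j + 1) * (t + 2))) := by
  have hterm : ∀ k : ℤ, imageTerm t (2 * n) 0 k =
      chooseZ (2 * n) (n - k * (t + 2)) - chooseZ (2 * n) (n - k * (t + 2) - 1) := fun k => by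
    rw [imageTerm, show 0 - k * (2 * (t + 2)) = 2 * (-(k * (t + 2))) by ring,
      show -2 - 0 - k * (2 * (t + 2)) = 2 * (-(k * (t + 2)) - 1) by ring,
      freeWalks_two_mul, freeWalks_two_mul, ← sub_eq_add_neg, ← add_sub_assoc, ← sub_eq_add_neg]
  have hq : ∀ j : ℕ, 2 * (j : ℤ) ≤ j * (t + 2) := fun j => by nlinarith
  rw [imageSum, finsum_congr hterm, finsum_int_eq_sum_range _ (n + 1)]
  · refine sum_congr rfl fun j _ => ?_
    rw [show (n : ℤ) - -(j + 1) * (t + 2) = n + (j + 1) * (t + 2) by ring,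
      show (n : ℤ) + (j + 1) * (t + 2) - 1 = n + ((j + 1) * (t + 2) - 1) by ring,
      chooseZ_two_mul_add, chooseZ_two_mul_add,
      show (n : ℤ) - ((j + 1) * (t + 2) - 1) = n - j * (t + 2) - t - 1 by ring]
    ring
  · intro j hj
    have := hq j
    rw [chooseZ_of_neg (by omega), chooseZ_of_neg (by omega), sub_self]
  · intro j hj
    have := hq (j + 1)
    push_cast at this
    rw [neg_mul, sub_neg_eq_add, chooseZ_of_lt (by omega), chooseZ_of_lt (by omega), sub_self]

lemma A_eq_stripCount (n t : ℕ) : A n t = stripCount t (2 * n) 0 := by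
  rcases Nat.eq_zero_or_pos n with rfl | hn
  · rw [A, if_pos rfl, stripCount_zero, if_pos rfl]
  rw [A, if_neg hn.ne', stripCount]
  refine Nat.card_congr (Equiv.subtypeEquivRight fun a => ⟨?_, ?_⟩)
  · rintro ⟨⟨h1, hfin, hstep, h0, htail⟩, hle⟩
    refine ⟨by simp [h0], hfin, fun i hi => ?_, hle, htail⟩
    rcases Nat.eq_zero_or_pos i with rfl | hi₀
    · simp [h0, h1]
    · exact hstep i hi₀ hi
  · intro h
    have h0 : a 0 = 0 := by exact_mod_cast h.start
    have h1 : a 1 = 1 := by have := h.step 0 (by omega); simp only [zero_add, h0] at this; omega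
    exact ⟨⟨h1, h.finish, fun i _ hi => h.step i hi, h0, h.eq_zero_of_lt⟩, h.le_height⟩

theorem stmt1_general (n t : ℕ) :
    (A n t : ℤ) =
      ∑ j ∈ Finset.range (n+1),
        ((chooseZ (2*n) ((n : ℤ) - j*(t+2)) : ℤ)
          - chooseZ (2*n) ((n : ℤ) - j*(t+2) - 1)
          - chooseZ (2*n) ((n : ℤ) - j*(t+2) - t - 1)
          + chooseZ (2*n) ((n : ℤ) - (j+1)*(t+2))) := by
  rw [A_eq_stripCount, stripCount_eq_imageSum t (2 * n) (by norm_num) (by positivity),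
    imageSum_two_mul_zero]

theorem stmt1 (n t : ℕ) (hn : 1 ≤ n) :
    (A n t : ℤ) =
      ∑ j ∈ Finset.range (n+1),
        ((chooseZ (2*n) ((n : ℤ) - j*(t+2)) : ℤ)
          - chooseZ (2*n) ((n : ℤ) - j*(t+2) - 1)
          - chooseZ (2*n) ((n : ℤ) - j*(t+2) - t - 1)
          + chooseZ (2*n) ((n : ℤ) - (j+1)*(t+2))) :=
  stmt1_general n t
end

section
/- For n ≥ 1 and t ≥ 0, the number A_{n,t} of Dyck paths of semilength n with height at most t satisfies A_{n,t} = (1/(t+2)) * Σ_{1 ≤ j ≤ (t+1)/2} 4^{n+1} sin²(jπ/(t+2)) cos^{2n}(jπ/(t+2)). -/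
/-!
A Dyck path of semilength `n` and height at most `t` is a walk of length `2n` from `0` to `0` on
the path graph `0, …, t`. Removing the last step shows that the number `W m k` of such walks of
length `m` ending at `k` satisfies `W (m+1) k = W m (k-1) + W m (k+1)`, with `W m (t+1) = 0`.
With `θ_j = jπ/(t+2)`, the expression `(2/(t+2)) ∑_j (2 cos θ_j)^m sin θ_j sin ((k+1) θ_j)`
satisfies the same recursion, because `2 cos θ sin ((k+1)θ) = sin (kθ) + sin ((k+2)θ)` and
`sin ((t+2) θ_j) = 0`, and it has the same initial values by the orthogonality of the discrete
sines. For `m = 2n`, `k = 0` the summand is invariant under `j ↦ t + 2 - j`, so the sum folds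
onto `1 ≤ j ≤ (t+1)/2`.
-/

open Finset Real Filter

lemma sum_range_eq_two_nsmul_sum_Icc {M : Type*} [AddCommMonoid M] (f : ℕ → M) (N : ℕ)
    (h0 : f 0 = 0) (hsymm : ∀ j ≤ N, f (N - j) = f j) (hmid : Even N → f (N / 2) = 0) :
    ∑ j ∈ range N, f j = 2 • ∑ j ∈ Icc 1 ((N - 1) / 2), f j := by
  have hIcc (r : ℕ) : ∑ j ∈ Icc 1 r, f j = ∑ i ∈ range r, f (i + 1) := by
    rw [← Ico_add_one_right_eq_Icc, sum_Ico_eq_sum_range]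
    simp [add_comm]
  have hreflect (r : ℕ) (hr : 2 * r ≤ N) :
      ∑ i ∈ range r, f (N - r + i) = ∑ i ∈ range r, f (i + 1) := by
    rw [← sum_range_reflect]
    refine sum_congr rfl fun i hi => ?_
    rw [mem_range] at hi
    rw [show N - r + (r - 1 - i) = N - (i + 1) by omega, hsymm _ (by omega)]
  obtain ⟨r, rfl | rfl⟩ | rfl : (∃ r, N = 2 * r + 1 ∨ N = 2 * r + 2) ∨ N = 0 := by
    rcases N with _ | N
    · exact Or.inr rfl
    · exact Or.inl ⟨N / 2, by omega⟩
  · rw [show 2 * r + 1 = (r + 1) + r by ring, sum_range_add, sum_range_succ', h0, add_zero,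
      show (r + 1 + r - 1) / 2 = r by omega, hIcc, two_nsmul]
    congr 1
    convert hreflect r (by omega) using 3
    omega
  · have hmid' : f (r + 1) = 0 := by
      simpa [show (2 * r + 2) / 2 = r + 1 by omega] using hmid ⟨r + 1, by ring⟩
    rw [show 2 * r + 2 = (r + 1) + (r + 1) by ring, sum_range_add, sum_range_succ',
      sum_range_succ' (fun k => f (r + 1 + k)), h0, add_zero, add_zero, hmid', add_zero,
      show (r + 1 + (r + 1) - 1) / 2 = r by omega, hIcc, two_nsmul]
    congr 1
    convert hreflect r (by omega) using 3
    omega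
  · simp

def boundedWalks (t m k : ℕ) : Set (ℕ → ℕ) :=
  {b | b 0 = 0 ∧ (∀ i < m, b (i + 1) = b i + 1 ∨ b i = b (i + 1) + 1) ∧
    (∀ i, m ≤ i → b i = k) ∧ ∀ i, b i ≤ t}

noncomputable def walkCount (t m k : ℕ) : ℕ := (boundedWalks t m k).ncard

def freezeAfter (m : ℕ) (b : ℕ → ℕ) : ℕ → ℕ := fun i => b (min i m)

namespace boundedWalks

variable {t m k : ℕ} {b : ℕ → ℕ}

lemma freezeAfter_eq (hb : b ∈ boundedWalks t m k) : freezeAfter m b = b := by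
  funext i
  rcases le_total i m with hi | hi
  · simp [freezeAfter, hi]
  · simp [freezeAfter, hi, hb.2.2.1 i hi, hb.2.2.1 m le_rfl]

lemma finite (t m k : ℕ) : (boundedWalks t m k).Finite := by
  refine (Set.finite_range fun g : Fin (m + 1) → Fin (t + 1) =>
    fun i => (g ⟨min i m, by omega⟩ : ℕ)).subset fun b hb => ?_
  refine ⟨fun i => ⟨b i, Nat.lt_succ_of_le (hb.2.2.2 i)⟩, ?_⟩
  exact freezeAfter_eq hb

lemma disjoint {k k' : ℕ} (h : k ≠ k') : Disjoint (boundedWalks t m k) (boundedWalks t m k') :=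
  Set.disjoint_left.2 fun _ hb hb' => h ((hb.2.2.1 m le_rfl).symm.trans (hb'.2.2.1 m le_rfl))

lemma injOn_freezeAfter : Set.InjOn (freezeAfter m) (boundedWalks t (m + 1) k) := by
  intro b hb c hc hbc
  funext i
  rcases le_or_gt i m with hi | hi
  · simpa [freezeAfter, hi] using congrFun hbc i
  · rw [hb.2.2.1 i hi, hc.2.2.1 i hi]

lemma image_freezeAfter (hk : k ≤ t) :
    freezeAfter m '' boundedWalks t (m + 1) k =
      ⋃ k' ∈ {k' | k' + 1 = k ∨ k' = k + 1}, boundedWalks t m k' := by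
  ext c
  simp only [Set.mem_image, Set.mem_iUnion, Set.mem_ofPred_eq, exists_prop]
  constructor
  · rintro ⟨b, ⟨h0, hstep, hend, hbd⟩, rfl⟩
    have hlast := hstep m (Nat.lt_succ_self m)
    rw [hend (m + 1) le_rfl] at hlast
    refine ⟨b m, by omega, ?_, ?_, ?_, fun i => hbd _⟩
    · simp [freezeAfter, h0]
    · intro i hi
      simpa [freezeAfter, hi.le, Nat.succ_le_of_lt hi] using hstep i (by omega)
    · intro i hi
      simp [freezeAfter, hi]
  · rintro ⟨k', hk', hc⟩
    refine ⟨fun i => if i ≤ m then c i else k, ⟨by simp [hc.1], ?_, ?_, ?_⟩, ?_⟩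
    · intro i hi
      rcases Nat.lt_or_ge i m with him | him
      · simpa [him.le, Nat.succ_le_of_lt him] using hc.2.1 i him
      · have hcm := hc.2.2.1 i him
        simp only [show i ≤ m by omega, if_true, show ¬ i + 1 ≤ m by omega, if_false]
        omega
    · intro i hi
      simp [show ¬ i ≤ m by omega]
    · intro i
      dsimp only
      split_ifs
      exacts [hc.2.2.2 i, hk]
    · conv_rhs => rw [← freezeAfter_eq hc]
      funext i
      simp [freezeAfter]

end boundedWalks

lemma walkCount_zero (t k : ℕ) : walkCount t 0 k = if k = 0 then 1 else 0 := by
  split_ifs with hk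
  · subst hk
    rw [walkCount, show boundedWalks t 0 0 = {fun _ => 0} from ?_, Set.ncard_singleton]
    ext b
    simp only [boundedWalks, Set.mem_ofPred_eq, Set.mem_singleton_iff]
    constructor
    · rintro ⟨-, -, hend, -⟩
      exact funext fun i => hend i (Nat.zero_le i)
    · rintro rfl
      simp
  · rw [walkCount, Set.ncard_eq_zero (boundedWalks.finite t 0 k)]
    exact Set.eq_empty_of_forall_notMem fun b hb => hk (by rw [← hb.2.2.1 0 le_rfl, hb.1])

lemma walkCount_eq_zero_of_lt {t m k : ℕ} (h : t < k) : walkCount t m k = 0 := by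
  rw [walkCount, Set.ncard_eq_zero (boundedWalks.finite t m k)]
  exact Set.eq_empty_of_forall_notMem fun b hb => by
    have := hb.2.2.2 m
    rw [hb.2.2.1 m le_rfl] at this
    omega

lemma walkCount_succ_eq_ncard_iUnion {t m k : ℕ} (hk : k ≤ t) :
    walkCount t (m + 1) k =
      (⋃ k' ∈ {k' | k' + 1 = k ∨ k' = k + 1}, boundedWalks t m k').ncard := by
  rw [walkCount, ← boundedWalks.image_freezeAfter hk,
    boundedWalks.injOn_freezeAfter.ncard_image]

lemma walkCount_succ_zero (t m : ℕ) : walkCount t (m + 1) 0 = walkCount t m 1 := by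
  rw [walkCount_succ_eq_ncard_iUnion (Nat.zero_le t),
    show {k' | k' + 1 = 0 ∨ k' = 0 + 1} = {1} by ext; simp, Set.biUnion_singleton, walkCount]

lemma walkCount_succ_succ {t m k : ℕ} (hk : k + 1 ≤ t) :
    walkCount t (m + 1) (k + 1) = walkCount t m k + walkCount t m (k + 2) := by
  rw [walkCount_succ_eq_ncard_iUnion hk,
    show {k' | k' + 1 = k + 1 ∨ k' = k + 1 + 1} = {k, k + 2} by ext; simp,
    Set.biUnion_pair, Set.ncard_union_eq (boundedWalks.disjoint (by omega))
      (boundedWalks.finite t m k) (boundedWalks.finite t m (k + 2)), walkCount, walkCount]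

lemma A_eq_walkCount {n : ℕ} (t : ℕ) (hn : n ≠ 0) : A n t = walkCount t (2 * n) 0 := by
  rw [A, if_neg hn, walkCount, ← Nat.card_coe_set_eq]
  congr 2
  ext a
  simp only [IsDyckSeq, boundedWalks, Set.mem_ofPred_eq]
  constructor
  · rintro ⟨⟨h1, h2n, hstep, h0, hpad⟩, hbd⟩
    refine ⟨h0, fun i hi => ?_, fun i hi => ?_, hbd⟩
    · rcases Nat.eq_zero_or_pos i with rfl | hi1
      · left; rw [h1, h0]
      · exact hstep i hi1 hi
    · rcases hi.eq_or_lt with rfl | hi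
      exacts [h2n, hpad i hi]
  · rintro ⟨h0, hstep, hend, hbd⟩
    have h1 : a 1 = 1 := by
      have := hstep 0 (by omega)
      simp only [zero_add, h0] at this
      omega
    exact ⟨⟨h1, hend _ le_rfl, fun i _ hi => hstep i hi, h0, fun i hi => hend i hi.le⟩, hbd⟩

noncomputable def angle (t j : ℕ) : ℝ := j * π / (t + 2)

lemma angle_sub {t j : ℕ} (hj : j ≤ t + 2) : angle t (t + 2 - j) = π - angle t j := by
  rw [angle, angle, Nat.cast_sub hj]
  push_cast
  field_simp

lemma angle_of_two_mul {t s : ℕ} (hs : t + 2 = s + s) : angle t s = π / 2 := by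
  have hs' : (t : ℝ) + 2 = s + s := by exact_mod_cast hs
  have hs0 : (s : ℝ) ≠ 0 := by norm_cast; omega
  rw [angle, hs']
  field_simp
  ring

lemma sin_mul_angle_self (t j : ℕ) : sin ((t + 2) * angle t j) = 0 := by
  rw [angle, ← Real.sin_nat_mul_pi j]
  congr 1
  field_simp

lemma sum_cos_mul_angle {t m : ℕ} (hm0 : 0 < m) (hm : m < 2 * (t + 2)) :
    ∑ j ∈ range (t + 2), cos (m * angle t j) = sin (m * π / 2) ^ 2 := by
  set a : ℝ := m * π / (t + 2)
  have ha : 0 < a / 2 ∧ a / 2 < π := by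
    have hm' : (m : ℝ) < 2 * (t + 2) := by exact_mod_cast hm
    constructor
    · positivity
    · rw [div_div, div_lt_iff₀ (by positivity)]
      nlinarith [Real.pi_pos]
  have hsin : sin (a / 2) ≠ 0 := (Real.sin_pos_of_pos_of_lt_pi ha.1 ha.2).ne'
  have hsum := Real.sin_mul_sum_cos (t + 2) a 0
  have hhalf : (((t + 2 : ℕ) : ℝ) * a / 2) = m * π / 2 := by
    simp only [a]; push_cast; field_simp
  have hrest : ((((t + 2 : ℕ) : ℝ) - 1) * a / 2 + 0) = m * π / 2 - a / 2 := by
    simp only [a]; push_cast; field_simp; ring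
  have hsc : sin (m * π / 2) * cos (m * π / 2) = 0 := by
    have := Real.sin_two_mul (m * π / 2)
    rw [show 2 * (m * π / 2) = m * π by ring, Real.sin_nat_mul_pi] at this
    linarith
  rw [hhalf, hrest, Real.cos_sub] at hsum
  apply mul_left_cancel₀ hsin
  calc sin (a / 2) * ∑ j ∈ range (t + 2), cos (m * angle t j)
      = sin (a / 2) * ∑ j ∈ range (t + 2), cos (a * j + 0) := by
        congr 1
        refine sum_congr rfl fun j _ => ?_
        simp only [a, angle, add_zero]
        ring_nf
    _ = sin (a / 2) * sin (m * π / 2) ^ 2 := by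
        rw [hsum]
        linear_combination cos (a / 2) * hsc

lemma sum_sin_angle_mul_sin {t k : ℕ} (hk : k ≤ t + 1) :
    ∑ j ∈ range (t + 2), sin (angle t j) * sin ((k + 1 : ℕ) * angle t j) =
      if k = 0 then ((t : ℝ) + 2) / 2 else 0 := by
  have hprod (θ : ℝ) :
      sin θ * sin ((k + 1 : ℕ) * θ) = (cos (k * θ) - cos ((k + 2 : ℕ) * θ)) / 2 := by
    rw [Real.cos_sub_cos]
    push_cast
    rw [show (k * θ + (k + 2) * θ) / 2 = (k + 1) * θ by ring,
      show (k * θ - (k + 2) * θ) / 2 = -θ by ring, Real.sin_neg]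
    ring
  simp only [hprod, ← sum_div, sum_sub_distrib]
  rw [sum_cos_mul_angle (m := k + 2) (by omega) (by omega)]
  split_ifs with hk0
  · subst hk0
    rw [show ((0 + 2 : ℕ) : ℝ) * π / 2 = π by push_cast; ring]
    simp
  · rw [sum_cos_mul_angle (by omega) (by omega)]
    push_cast
    rw [show ((k : ℝ) + 2) * π / 2 = k * π / 2 + π by ring, Real.sin_add_pi]
    ring

/-- The spectral decomposition of the adjacency matrix of the path `0, …, t`: its eigenvalues are
`2 cos (angle t j)`, `1 ≤ j ≤ t + 1`, with eigenvectors `h ↦ sin ((h + 1) * angle t j)` (the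
term `j = 0` of the sum vanishes), so height `h` of a walk corresponds to the index `k = h + 1`. -/
noncomputable def spectralCount (t m k : ℕ) : ℝ :=
  2 / (t + 2) *
    ∑ j ∈ range (t + 2), (2 * cos (angle t j)) ^ m * sin (angle t j) * sin (k * angle t j)

lemma spectralCount_zero {t k : ℕ} (hk : k ≤ t + 1) :
    spectralCount t 0 (k + 1) = if k = 0 then 1 else 0 := by
  simp only [spectralCount, pow_zero, one_mul]
  rw [sum_sin_angle_mul_sin hk]
  split_ifs
  · field_simp
  · rw [mul_zero]

lemma spectralCount_at_zero (t m : ℕ) : spectralCount t m 0 = 0 := by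
  simp [spectralCount]

lemma spectralCount_at_top (t m : ℕ) : spectralCount t m (t + 2) = 0 := by
  simp [spectralCount, sin_mul_angle_self]

lemma spectralCount_succ (t m k : ℕ) :
    spectralCount t (m + 1) (k + 1) = spectralCount t m k + spectralCount t m (k + 2) := by
  simp only [spectralCount, ← mul_add, ← sum_add_distrib]
  congr 1
  refine sum_congr rfl fun j _ => ?_
  set θ := angle t j
  push_cast
  rw [show (k : ℝ) * θ = (k + 1) * θ - θ by ring,
    show ((k : ℝ) + 2) * θ = (k + 1) * θ + θ by ring, Real.sin_sub, Real.sin_add]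
  ring

lemma walkCount_eq_spectralCount (t m : ℕ) :
    ∀ k ≤ t + 1, (walkCount t m k : ℝ) = spectralCount t m (k + 1) := by
  induction m with
  | zero =>
    intro k hk
    rw [walkCount_zero, spectralCount_zero hk]
    split_ifs <;> simp
  | succ m ih =>
    rintro (_ | k) hk
    · rw [walkCount_succ_zero, ih 1 (by omega), spectralCount_succ, spectralCount_at_zero,
        zero_add]
    · rcases hk.eq_or_lt with hkt | hk
      · obtain rfl : k = t := by omega
        rw [walkCount_eq_zero_of_lt (by omega), spectralCount_at_top, Nat.cast_zero]
      · rw [walkCount_succ_succ (by omega), Nat.cast_add, ih k (by omega), ih (k + 2) (by omega),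
          spectralCount_succ]

theorem stmt2 (n t : ℕ) (hn : 1 ≤ n) :
    (A n t : ℝ) =
      (1 / (t+2)) * ∑ j ∈ Finset.Icc 1 ((t+1)/2),
        4^(n+1) * Real.sin (j * Real.pi / (t+2))^2
          * Real.cos (j * Real.pi / (t+2))^(2*n) := by
  set f : ℕ → ℝ := fun j => 4 ^ (n + 1) * sin (angle t j) ^ 2 * cos (angle t j) ^ (2 * n)
  have hfold : ∑ j ∈ range (t + 2), f j = 2 • ∑ j ∈ Icc 1 ((t + 1) / 2), f j := by
    refine sum_range_eq_two_nsmul_sum_Icc f (t + 2) (by simp [f, angle]) (fun j hj => ?_) ?_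
    · simp only [f, angle_sub hj, Real.sin_pi_sub, Real.cos_pi_sub, (even_two_mul n).neg_pow]
    · rintro ⟨s, hs⟩
      simp [f, show (t + 2) / 2 = s by omega, angle_of_two_mul hs, show 2 * n ≠ 0 by omega]
  have hspectral : spectralCount t (2 * n) 1 = 1 / (t + 2) * ∑ j ∈ range (t + 2), f j / 2 := by
    simp only [spectralCount, f, mul_sum, Nat.cast_one, one_mul]
    refine sum_congr rfl fun j _ => ?_
    rw [mul_pow, pow_mul, pow_succ]
    ring
  rw [A_eq_walkCount t (by omega), walkCount_eq_spectralCount t _ 0 (by omega), hspectral,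
    ← sum_div, hfold, two_nsmul]
  simp only [f, angle]
  ring
end

section
/- (Sock Matching Theorem, first alternative) For n ≥ 1 and k ≥ 1, B_{n,k} = Σ_{i=1}^{n} ( B_{i-1,k-1} C_{n-i} + C_{i-1} B_{n-i,k} − B_{i-1,k-1} B_{n-i,k} ), where B_{0,0} = 1 and B_{0,k} = 0 for k ≥ 1. -/
/-!
Split a Dyck path at its first return to height zero: it is `U p D q` with `p` of semilength
`i - 1` and `q` of semilength `n - i`, and this decomposition is a bijection onto pairs of paths.
The path reaches height `k` exactly when `p` reaches `k - 1` or `q` reaches `k`, so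
inclusion–exclusion over the pairs gives the `i`-th summand. The same decomposition without a
height condition is the Catalan recurrence, which identifies the number of all paths with `C n`.
-/

open Finset Real Filter

/-- Unlike `IsDyckSeq`, this also admits the empty path: for `m = 0` it forces `a = 0`. -/
structure IsDyckPath (m : ℕ) (a : ℕ → ℕ) : Prop where
  apply_zero : a 0 = 0
  step : ∀ i < 2 * m, a (i + 1) = a i + 1 ∨ a i = a (i + 1) + 1
  apply_of_le : ∀ i, 2 * m ≤ i → a i = 0

lemma isDyckSeq_iff_isDyckPath {m : ℕ} (hm : m ≠ 0) (a : ℕ → ℕ) :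
    IsDyckSeq m a ↔ IsDyckPath m a := by
  constructor
  · rintro ⟨h1, h2m, hstep, h0, hpad⟩
    refine ⟨h0, fun i hi => ?_, fun i hi => ?_⟩
    · rcases Nat.eq_zero_or_pos i with rfl | hi0
      · simp [h0, h1]
      · exact hstep i hi0 hi
    · rcases hi.eq_or_lt with rfl | hi
      · exact h2m
      · exact hpad i hi
  · rintro ⟨h0, hstep, hpad⟩
    refine ⟨?_, hpad _ le_rfl, fun i _ hi => hstep i hi, h0, fun i hi => hpad i hi.le⟩
    simpa [h0] using hstep 0 (by omega)

namespace IsDyckPath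

variable {m : ℕ} {a : ℕ → ℕ}

lemma zero_iff : IsDyckPath 0 a ↔ a = 0 := by
  refine ⟨fun h => funext fun i => h.apply_of_le i (Nat.zero_le _), ?_⟩
  rintro rfl
  exact ⟨rfl, by omega, fun _ _ => rfl⟩

lemma le_self (h : IsDyckPath m a) (j : ℕ) : a j ≤ j := by
  induction j with
  | zero => simp [h.apply_zero]
  | succ j ih =>
    rcases lt_or_ge j (2 * m) with hj | hj
    · rcases h.step j hj with hs | hs <;> omega
    · simp [h.apply_of_le (j + 1) (by omega)]

lemma two_dvd_add_self (h : IsDyckPath m a) {j : ℕ} (hj : j ≤ 2 * m) : 2 ∣ a j + j := by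
  induction j with
  | zero => simp [h.apply_zero]
  | succ j ih =>
    have := ih (by omega)
    rcases h.step j (by omega) with hs | hs <;> omega

lemma finite_setOf (m : ℕ) : {a | IsDyckPath m a}.Finite := by
  refine Set.Finite.of_finite_image (f := fun a (j : Fin (2 * m + 1)) => a j) ?_ ?_
  · refine (Set.Finite.pi fun _ => Set.finite_Iic (2 * m)).subset ?_
    rintro _ ⟨a, ha, rfl⟩ j -
    exact (ha.le_self j).trans (by omega)
  · intro a ha b hb hab
    funext j
    rcases le_or_gt j (2 * m) with hj | hj
    · exact congrFun hab ⟨j, by omega⟩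
    · rw [ha.apply_of_le j hj.le, hb.apply_of_le j hj.le]

/-- The first return to height zero happens at an even time, since `a j + j` is always even. -/
lemma exists_firstReturn (h : IsDyckPath (m + 1) a) :
    ∃ i ≤ m, a (2 * i + 2) = 0 ∧ ∀ j ≤ 2 * i, 0 < a (j + 1) := by
  have hex : ∃ t, 0 < t ∧ a t = 0 := ⟨2 * m + 2, by omega, h.apply_of_le _ (by omega)⟩
  obtain ⟨ht0, hret⟩ := Nat.find_spec hex
  have hle : Nat.find hex ≤ 2 * m + 2 := Nat.find_min' hex ⟨by omega, h.apply_of_le _ (by omega)⟩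
  have hpar := h.two_dvd_add_self hle
  refine ⟨Nat.find hex / 2 - 1, by omega, ?_, fun j hj => ?_⟩
  · rwa [show 2 * (Nat.find hex / 2 - 1) + 2 = Nat.find hex by omega]
  · exact Nat.pos_of_ne_zero fun hz => Nat.find_min hex (by omega) ⟨by omega, hz⟩

end IsDyckPath

noncomputable def dyckPaths (m : ℕ) : Finset (ℕ → ℕ) := (IsDyckPath.finite_setOf m).toFinset

@[simp]
lemma mem_dyckPaths {m : ℕ} {a : ℕ → ℕ} : a ∈ dyckPaths m ↔ IsDyckPath m a :=
  Set.Finite.mem_toFinset _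

lemma dyckPaths_zero : dyckPaths 0 = {0} := by
  ext a
  simp [IsDyckPath.zero_iff]

/-- The path `U p D q`, where `p` has semilength `i`; it first returns to zero at `2 * i + 2`. -/
def dyckGlue (i : ℕ) (p q : ℕ → ℕ) (j : ℕ) : ℕ :=
  if 0 < j ∧ j ≤ 2 * i + 1 then p (j - 1) + 1 else q (j - (2 * i + 2))

def innerPath (i : ℕ) (a : ℕ → ℕ) (j : ℕ) : ℕ := if j ≤ 2 * i then a (j + 1) - 1 else 0

def outerPath (i : ℕ) (a : ℕ → ℕ) (j : ℕ) : ℕ := a (j + (2 * i + 2))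

section Glue

variable {i j : ℕ} {p q a : ℕ → ℕ}

lemma dyckGlue_zero : dyckGlue i p q 0 = q 0 := by
  simp [dyckGlue]

lemma dyckGlue_succ_of_le {l : ℕ} (hl : l ≤ 2 * i) : dyckGlue i p q (l + 1) = p l + 1 := by
  rw [dyckGlue, if_pos (by omega), Nat.add_sub_cancel]

lemma dyckGlue_add (l : ℕ) : dyckGlue i p q (l + (2 * i + 2)) = q l := by
  rw [dyckGlue, if_neg (by omega), Nat.add_sub_cancel]

lemma IsDyckPath.dyckGlue (hp : IsDyckPath i p) (hq : IsDyckPath j q) :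
    IsDyckPath (i + j + 1) (dyckGlue i p q) := by
  refine ⟨by rw [dyckGlue_zero, hq.apply_zero], fun l hl => ?_, fun l hl => ?_⟩
  · rcases (show l = 0 ∨ (0 < l ∧ l < 2 * i + 1) ∨ l = 2 * i + 1 ∨ 2 * i + 2 ≤ l by omega) with
      rfl | ⟨hl0, hli⟩ | rfl | hli
    · rw [dyckGlue_zero, hq.apply_zero, dyckGlue_succ_of_le (Nat.zero_le _), hp.apply_zero]
      exact Or.inl rfl
    · obtain ⟨l, rfl⟩ : ∃ l', l = l' + 1 := ⟨l - 1, by omega⟩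
      rw [dyckGlue_succ_of_le (by omega), dyckGlue_succ_of_le (by omega)]
      rcases hp.step l (by omega) with hs | hs <;> omega
    · rw [show 2 * i + 1 + 1 = 0 + (2 * i + 2) by omega, dyckGlue_add, hq.apply_zero,
        dyckGlue_succ_of_le le_rfl, hp.apply_of_le _ le_rfl]
      exact Or.inr rfl
    · obtain ⟨l, rfl⟩ : ∃ l', l = l' + (2 * i + 2) := ⟨l - (2 * i + 2), by omega⟩
      rw [Nat.add_right_comm, dyckGlue_add, dyckGlue_add]
      exact hq.step l (by omega)
  · obtain ⟨l, rfl⟩ : ∃ l', l = l' + (2 * i + 2) := ⟨l - (2 * i + 2), by omega⟩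
    rw [dyckGlue_add, hq.apply_of_le l (by omega)]

lemma innerPath_dyckGlue (hp : IsDyckPath i p) : innerPath i (dyckGlue i p q) = p := by
  funext l
  rw [innerPath]
  split_ifs with hl
  · rw [dyckGlue_succ_of_le hl, Nat.add_sub_cancel]
  · rw [hp.apply_of_le l (by omega)]

lemma outerPath_dyckGlue : outerPath i (dyckGlue i p q) = q :=
  funext fun _ => dyckGlue_add _

lemma dyckGlue_ne_of_lt {i' : ℕ} {p' q' : ℕ → ℕ} (hq : q 0 = 0) (hlt : i < i') :
    dyckGlue i p q ≠ dyckGlue i' p' q' := by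
  intro h
  have := congrFun h (2 * i + 1 + 1)
  rw [show 2 * i + 1 + 1 = 0 + (2 * i + 2) by omega, dyckGlue_add, hq,
    show 0 + (2 * i + 2) = 2 * i + 1 + 1 by omega, dyckGlue_succ_of_le (by omega)] at this
  omega

lemma eq_of_dyckGlue_eq {i' : ℕ} {p' q' : ℕ → ℕ} (hq : q 0 = 0) (hq' : q' 0 = 0)
    (h : dyckGlue i p q = dyckGlue i' p' q') : i = i' :=
  le_antisymm (not_lt.1 fun hlt => dyckGlue_ne_of_lt hq' hlt h.symm)
    (not_lt.1 fun hlt => dyckGlue_ne_of_lt hq hlt h)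

lemma IsDyckPath.innerPath (h : IsDyckPath (i + j + 1) a) (hret : a (2 * i + 2) = 0)
    (hpos : ∀ l ≤ 2 * i, 0 < a (l + 1)) : IsDyckPath i (innerPath i a) := by
  refine ⟨?_, fun l hl => ?_, fun l hl => ?_⟩
  · have := h.step 0 (by omega)
    rw [_root_.innerPath, if_pos (Nat.zero_le _)]
    simp only [Nat.zero_add, h.apply_zero] at this ⊢
    omega
  · rw [_root_.innerPath, _root_.innerPath, if_pos (by omega), if_pos (by omega)]
    have := hpos l (by omega)
    have := hpos (l + 1) (by omega)
    rcases h.step (l + 1) (by omega) with hs | hs <;> omega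
  · rw [_root_.innerPath]
    split_ifs with hl'
    · obtain rfl : l = 2 * i := by omega
      have := h.step (2 * i + 1) (by omega)
      rw [hret] at this
      omega
    · rfl

lemma IsDyckPath.outerPath (h : IsDyckPath (i + j + 1) a) (hret : a (2 * i + 2) = 0) :
    IsDyckPath j (outerPath i a) := by
  refine ⟨by rwa [_root_.outerPath, Nat.zero_add], fun l hl => ?_,
    fun l hl => h.apply_of_le _ (by omega)⟩
  rw [_root_.outerPath, _root_.outerPath, Nat.add_right_comm]
  exact h.step _ (by omega)

lemma dyckGlue_innerPath_outerPath (ha0 : a 0 = 0) (hret : a (2 * i + 2) = 0)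
    (hpos : ∀ l ≤ 2 * i, 0 < a (l + 1)) : dyckGlue i (innerPath i a) (outerPath i a) = a := by
  funext l
  rcases (show l = 0 ∨ (0 < l ∧ l ≤ 2 * i + 1) ∨ 2 * i + 2 ≤ l by omega) with
    rfl | ⟨hl0, hli⟩ | hli
  · rw [dyckGlue_zero, outerPath, Nat.zero_add, hret, ha0]
  · obtain ⟨l, rfl⟩ : ∃ l', l = l' + 1 := ⟨l - 1, by omega⟩
    rw [dyckGlue_succ_of_le (by omega), innerPath, if_pos (by omega)]
    have := hpos l (by omega)
    omega
  · obtain ⟨l, rfl⟩ : ∃ l', l = l' + (2 * i + 2) := ⟨l - (2 * i + 2), by omega⟩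
    rw [dyckGlue_add, outerPath]

lemma exists_le_dyckGlue_iff (hp : IsDyckPath i p) (k : ℕ) :
    (∃ l, k + 1 ≤ dyckGlue i p q l) ↔ (∃ l, k ≤ p l) ∨ ∃ l, k + 1 ≤ q l := by
  constructor
  · rintro ⟨l, hl⟩
    rw [dyckGlue] at hl
    split_ifs at hl
    · exact Or.inl ⟨l - 1, by omega⟩
    · exact Or.inr ⟨_, hl⟩
  · rintro (⟨l, hl⟩ | ⟨l, hl⟩)
    · rcases le_or_gt l (2 * i) with hli | hli
      · exact ⟨l + 1, by rw [dyckGlue_succ_of_le hli]; omega⟩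
      · rw [hp.apply_of_le l hli.le] at hl
        exact ⟨0 + 1, by rw [dyckGlue_succ_of_le (Nat.zero_le _)]; omega⟩
    · exact ⟨l + (2 * i + 2), by rwa [dyckGlue_add]⟩

end Glue

open Classical in
lemma dyckPaths_succ (m : ℕ) :
    dyckPaths (m + 1) = (antidiagonal m).biUnion fun ij =>
      (dyckPaths ij.1 ×ˢ dyckPaths ij.2).image fun pq => dyckGlue ij.1 pq.1 pq.2 := by
  ext a
  simp only [mem_biUnion, mem_image, mem_product, HasAntidiagonal.mem_antidiagonal, mem_dyckPaths,
    Prod.exists]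
  constructor
  · intro h
    obtain ⟨i, hi, hret, hpos⟩ := h.exists_firstReturn
    obtain ⟨j, rfl⟩ : ∃ j, m = i + j := ⟨m - i, by omega⟩
    exact ⟨i, j, rfl, innerPath i a, outerPath i a, ⟨h.innerPath hret hpos, h.outerPath hret⟩,
      dyckGlue_innerPath_outerPath h.apply_zero hret hpos⟩
  · rintro ⟨i, j, rfl, p, q, ⟨hp, hq⟩, rfl⟩
    exact hp.dyckGlue hq

lemma card_filter_dyckPaths_succ (m : ℕ) (W : (ℕ → ℕ) → Prop) [DecidablePred W] :
    #{a ∈ dyckPaths (m + 1) | W a} = ∑ ij ∈ antidiagonal m,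
      #{pq ∈ dyckPaths ij.1 ×ˢ dyckPaths ij.2 | W (dyckGlue ij.1 pq.1 pq.2)} := by
  classical
  rw [dyckPaths_succ, filter_biUnion, card_biUnion]
  · refine sum_congr rfl fun ij _ => ?_
    rw [filter_image, card_image_of_injOn]
    rintro ⟨p, q⟩ hpq ⟨p', q'⟩ hpq' h
    simp only [coe_filter, mem_product, mem_dyckPaths, Set.mem_ofPred_eq] at hpq hpq' h
    have hinner := congrArg (innerPath ij.1) h
    rw [innerPath_dyckGlue hpq.1.1, innerPath_dyckGlue hpq'.1.1] at hinner
    have houter := congrArg (outerPath ij.1) h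
    rw [outerPath_dyckGlue, outerPath_dyckGlue] at houter
    exact Prod.ext hinner houter
  · intro ij hij ij' hij' hne
    refine disjoint_left.2 fun a ha ha' => hne ?_
    simp only [mem_filter, mem_image, mem_product, mem_dyckPaths, Prod.exists] at ha ha'
    obtain ⟨⟨p, q, ⟨-, hq⟩, rfl⟩, -⟩ := ha
    obtain ⟨⟨p', q', ⟨-, hq'⟩, h⟩, -⟩ := ha'
    have h1 := eq_of_dyckGlue_eq hq.apply_zero hq'.apply_zero h.symm
    rw [mem_coe, HasAntidiagonal.mem_antidiagonal] at hij hij'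
    exact Prod.ext h1 (by omega)

lemma card_dyckPaths (m : ℕ) : #(dyckPaths m) = catalan m := by
  induction m using Nat.strong_induction_on with
  | _ m ih =>
    cases m with
    | zero => simp [dyckPaths_zero]
    | succ m =>
      have h := card_filter_dyckPaths_succ m fun _ => True
      rw [filter_true_of_mem fun _ _ => trivial] at h
      rw [h, catalan_succ']
      refine sum_congr rfl fun ij hij => ?_
      rw [HasAntidiagonal.mem_antidiagonal] at hij
      rw [filter_true_of_mem fun _ _ => trivial, card_product, ih _ (by omega), ih _ (by omega)]

lemma card_filter_product_or {α β : Type*} (s : Finset α) (t : Finset β) (p : α → Prop)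
    (q : β → Prop) [DecidablePred p] [DecidablePred q] :
    (#{x ∈ s ×ˢ t | p x.1 ∨ q x.2} : ℤ) =
      #{a ∈ s | p a} * #t + #s * #{b ∈ t | q b} - #{a ∈ s | p a} * #{b ∈ t | q b} := by
  classical
  have h := card_union_add_card_inter {x ∈ s ×ˢ t | p x.1} {x ∈ s ×ˢ t | q x.2}
  rw [← filter_or, ← filter_and, filter_product, filter_product_left, filter_product_right,
    card_product, card_product, card_product] at h
  have h' := congrArg (Nat.cast : ℕ → ℤ) h
  push_cast at h'
  linear_combination h'

lemma sum_Icc_eq_sum_antidiagonal {M : Type*} [AddCommMonoid M] (f : ℕ → ℕ → M) (m : ℕ) :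
    ∑ i ∈ Icc 1 (m + 1), f (i - 1) (m + 1 - i) = ∑ ij ∈ antidiagonal m, f ij.1 ij.2 := by
  rw [Nat.sum_antidiagonal_eq_sum_range_succ f, ← Ico_add_one_right_eq_Icc,
    sum_Ico_eq_sum_range]
  refine sum_congr (by simp) fun i _ => ?_
  congr 1 <;> omega

open Classical in
lemma B_eq_card_filter (n k : ℕ) : B n k = #{a ∈ dyckPaths n | ∃ i, k ≤ a i} := by
  rcases eq_or_ne n 0 with rfl | hn
  · cases k <;> simp [B, dyckPaths_zero, filter_singleton]
  · rw [B, if_neg hn, ← Nat.card_eq_finsetCard]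
    exact Nat.card_congr <| Equiv.subtypeEquivRight fun a => by
      simp [isDyckSeq_iff_isDyckPath hn]

lemma C_eq_catalan (m : ℕ) : C m = catalan m := by
  rw [C, catalan_eq_centralBinom_div, Nat.centralBinom]

/-- the Sock Matching Theorem, first alternative. -/
theorem stmt7 (n k : ℕ) (hn : 1 ≤ n) (hk : 1 ≤ k) :
    (B n k : ℤ) = ∑ i ∈ Finset.Icc 1 n,
      ((B (i-1) (k-1) : ℤ) * C (n-i) + (C (i-1) : ℤ) * B (n-i) k
        - (B (i-1) (k-1) : ℤ) * B (n-i) k) := by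
  classical
  obtain ⟨m, rfl⟩ : ∃ m, n = m + 1 := ⟨n - 1, by omega⟩
  obtain ⟨k, rfl⟩ : ∃ k', k = k' + 1 := ⟨k - 1, by omega⟩
  rw [Nat.add_sub_cancel, sum_Icc_eq_sum_antidiagonal
    (fun i j => (B i k : ℤ) * C j + (C i : ℤ) * B j (k + 1) - (B i k : ℤ) * B j (k + 1)),
    B_eq_card_filter, card_filter_dyckPaths_succ, Nat.cast_sum]
  refine sum_congr rfl fun ij _ => ?_
  rw [filter_congr fun pq hpq =>
      exists_le_dyckGlue_iff (mem_dyckPaths.1 (mem_product.1 hpq).1) k,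
    card_filter_product_or _ _ (fun p : ℕ → ℕ => ∃ l, k ≤ p l)
      (fun q : ℕ → ℕ => ∃ l, k + 1 ≤ q l),
    B_eq_card_filter, B_eq_card_filter, C_eq_catalan, C_eq_catalan, card_dyckPaths, card_dyckPaths]
end

section
/- For integers m ≥ N ≥ 1, Σ_{j=0}^{N−1} cos^{2m}(jπ/N) = 2^{1−2m} N ( binomial(2m−1, m−1) + Σ_{p=1}^{⌊m/N⌋} binomial(2m, m − pN) ). -/
open Finset Real Filter

/-! Expanding `cos x = (e^{ix} + e^{-ix}) / 2` binomially, the `k`-th term of `cos^{2m}(jπ/N)` is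
`(ζ^{k-m})^j` with `ζ = e^{2πi/N}` a primitive `N`-th root of unity. Summing over `j < N` kills
every term except those with `N ∣ k - m`, which contribute `N` each. The surviving indices are
`k = m` and `k = m ± pN` with `1 ≤ p ≤ m / N`, the two signs give equal binomial coefficients, and
`binom(2m, m) = 2 binom(2m-1, m-1)`. -/

theorem IsPrimitiveRoot.sum_range_zpow_pow {K : Type*} [Field K] {ζ : K} {N : ℕ}
    (hζ : IsPrimitiveRoot ζ N) (d : ℤ) :
    ∑ j ∈ range N, (ζ ^ d) ^ j = if (N : ℤ) ∣ d then (N : K) else 0 := by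
  split_ifs with hd
  · simp [(hζ.zpow_eq_one_iff_dvd d).2 hd]
  · have hpow : (ζ ^ d) ^ N = 1 := by
      rw [← zpow_natCast, ← zpow_mul, mul_comm, zpow_mul, zpow_natCast, hζ.pow_eq_one, one_zpow]
    rw [geom_sum_eq (mt (hζ.zpow_eq_one_iff_dvd d).1 hd), hpow, sub_self, zero_div]

theorem Complex.cos_pow_eq_sum (x : ℂ) (n : ℕ) :
    Complex.cos x ^ n =
      (∑ k ∈ range (n + 1), n.choose k * Complex.exp ((2 * k - n) * x * Complex.I)) / 2 ^ n := by
  rw [Complex.cos, div_pow, add_pow, sum_div, sum_div]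
  refine sum_congr rfl fun k hk => ?_
  have hkn : k ≤ n := Nat.lt_succ_iff.1 (mem_range.1 hk)
  rw [← Complex.exp_nat_mul, ← Complex.exp_nat_mul, mul_comm _ (n.choose k : ℂ), mul_assoc,
    ← Complex.exp_add, Nat.cast_sub hkn]
  ring_nf

theorem sum_Icc_filter_dvd_eq_sum_mul {M : Type*} [AddCommMonoid M] (h : ℕ → M) {N : ℕ}
    (hN : 0 < N) (m : ℕ) : ∑ d ∈ Icc 1 m with N ∣ d, h d = ∑ p ∈ Icc 1 (m / N), h (p * N) := by
  have : {d ∈ Icc 1 m | N ∣ d} = (Icc 1 (m / N)).map ⟨(· * N), mul_left_injective₀ hN.ne'⟩ := by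
    ext d
    simp only [mem_filter, mem_Icc, Finset.mem_map, Function.Embedding.coeFn_mk,
      Nat.le_div_iff_mul_le hN, dvd_iff_exists_eq_mul_left]
    constructor
    · rintro ⟨⟨hd, hdm⟩, p, rfl⟩
      exact ⟨p, ⟨Nat.pos_of_mul_pos_right hd, hdm⟩, rfl⟩
    · rintro ⟨p, ⟨hp, hpm⟩, rfl⟩
      exact ⟨⟨Nat.mul_pos hp hN, hpm⟩, p, rfl⟩
  rw [this, sum_map]
  rfl

theorem sum_range_choose_filter_dvd_sub {N : ℕ} (hN : 0 < N) (m : ℕ) :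
    ∑ k ∈ range (2 * m + 1) with (N : ℤ) ∣ ((k : ℕ) : ℤ) - m, (2 * m).choose k
      = (2 * m).choose m + 2 * ∑ p ∈ Icc 1 (m / N), (2 * m).choose (m - p * N) := by
  set g : ℕ → ℕ := fun d => if N ∣ d then (2 * m).choose (m - d) else 0
  have hg : ∑ k ∈ range m, g (k + 1) = ∑ p ∈ Icc 1 (m / N), (2 * m).choose (m - p * N) := by
    rw [range_eq_Ico, sum_Ico_add', zero_add, Ico_add_one_right_eq_Icc,
      ← sum_Icc_filter_dvd_eq_sum_mul (fun d => (2 * m).choose (m - d)) hN, sum_filter]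
  have hlow (k : ℕ) (hk : k ∈ range m) :
      (if (N : ℤ) ∣ ((m - 1 - k : ℕ) : ℤ) - m then (2 * m).choose (m - 1 - k) else 0)
        = g (k + 1) := by
    have hkm := mem_range.1 hk
    have : ((m - 1 - k : ℕ) : ℤ) - m = -((k + 1 : ℕ) : ℤ) := by push_cast; omega
    simp only [g, this, dvd_neg, Int.natCast_dvd_natCast]
    congr 2; omega
  have hhigh (k : ℕ) (hk : k ∈ range m) :
      (if (N : ℤ) ∣ ((m + (k + 1) : ℕ) : ℤ) - m then (2 * m).choose (m + (k + 1)) else 0)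
        = g (k + 1) := by
    have hkm := mem_range.1 hk
    have : ((m + (k + 1) : ℕ) : ℤ) - m = ((k + 1 : ℕ) : ℤ) := by push_cast; ring
    simp only [g, this, Int.natCast_dvd_natCast]
    rw [← Nat.choose_symm (by omega)]
    congr 2; omega
  -- reflect the indices below `m`; those above `m` go down by `Nat.choose_symm`
  rw [sum_filter, show 2 * m + 1 = m + (m + 1) by ring, sum_range_add, sum_range_succ',
    ← sum_range_reflect, sum_congr rfl hlow, sum_congr rfl hhigh, hg]
  simp only [add_zero, sub_self, dvd_zero, if_true]
  ring

theorem sum_range_cos_pow_two_mul {N : ℕ} (hN : 0 < N) (m : ℕ) :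
    ∑ j ∈ range N, cos (j * π / N) ^ (2 * m) =
      N / 2 ^ (2 * m) * (∑ k ∈ range (2 * m + 1) with (N : ℤ) ∣ ((k : ℕ) : ℤ) - m,
        (2 * m).choose k : ℕ) := by
  set ζ : ℂ := Complex.exp (2 * π * Complex.I / N)
  have hζ : IsPrimitiveRoot ζ N := Complex.isPrimitiveRoot_exp N hN.ne'
  have hexp (j k : ℕ) : Complex.exp ((2 * k - (2 * m : ℕ)) * (j * π / N) * Complex.I)
      = (ζ ^ ((k : ℤ) - m)) ^ j := by
    rw [← Complex.exp_int_mul, ← Complex.exp_nat_mul]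
    congr 1
    push_cast
    field_simp
  apply Complex.ofReal_injective
  push_cast
  simp_rw [Complex.cos_pow_eq_sum, hexp]
  rw [← sum_div, sum_comm]
  simp_rw [← mul_sum, hζ.sum_range_zpow_pow]
  rw [div_mul_eq_mul_div, sum_filter, mul_sum]
  congr 1
  refine sum_congr rfl fun k _ => ?_
  split_ifs <;> ring

theorem Nat.choose_two_mul_self_eq_two_mul {m : ℕ} (hm : 0 < m) :
    (2 * m).choose m = 2 * (2 * m - 1).choose (m - 1) := by
  obtain ⟨n, rfl⟩ : ∃ n, m = n + 1 := ⟨m - 1, by omega⟩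
  rw [show 2 * (n + 1) = 2 * n + 1 + 1 by ring, Nat.choose_succ_succ', Nat.choose_symm_half,
    Nat.add_sub_cancel, Nat.add_sub_cancel, ← two_mul]

/-- trigonometric power-sum identity. -/
theorem stmt12 (m N : ℕ) (hN : 1 ≤ N) (hm : N ≤ m) :
    ∑ j ∈ Finset.range N, Real.cos (j * Real.pi / N)^(2*m)
      = (2 : ℝ)^((1 : ℤ) - 2*m) * N *
          (((2*m-1).choose (m-1) : ℝ)
            + ∑ p ∈ Finset.Icc 1 (m/N), ((2*m).choose (m - p*N) : ℝ)) := by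
  have hpow : (2 : ℝ) ^ ((1 : ℤ) - 2 * m) = 2 / 2 ^ (2 * m) := by
    rw [zpow_sub₀ two_ne_zero, zpow_one]
    norm_cast
  rw [sum_range_cos_pow_two_mul hN, sum_range_choose_filter_dvd_sub hN,
    Nat.choose_two_mul_self_eq_two_mul (by omega), hpow]
  push_cast
  ring
end

section
/- For fixed k ≥ 2, A_{n,k−1} ~ (1/(k+1)) · 4^{n+1} · sin²(π/(k+1)) · cos^{2n}(π/(k+1)) as n → ∞; that is, the ratio of A_{n,k−1} to this expression tends to 1. -/
open Finset Real Filter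

/-!
A Dyck path of semilength `n` and height at most `t` is a walk of length `2n` from `0` to `0` on
the path graph `{0, …, t}`. Shifting positions by one, the vectors `x ↦ sin (x j π / (t + 2))`,
`1 ≤ j ≤ t + 1`, are eigenvectors of its adjacency matrix with eigenvalues `2 cos (j π / (t + 2))`,
and they are orthogonal; this gives the closed formula for `A n t` (checked by induction on the
length, with the discrete orthogonality of sines as base case). After dividing by the term of
`j = 1`, the terms of `j = 1` and `j = t + 1` (eigenvalues `±2 cos (π / (t + 2))`) each
contribute `1 / 2` while every other eigenvalue is strictly smaller in absolute value.
-/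

open Topology

theorem sum_range_cos_mul_pi_div {N d : ℕ} (hd : 0 < d) (hdN : d < 2 * N) :
    ∑ j ∈ range N, cos (j * (d * π / N)) = sin (d * π / 2) ^ 2 := by
  set a : ℝ := d * π / N
  have hN : (0 : ℝ) < N := by exact_mod_cast (show 0 < N by omega)
  have ha : 0 < a / 2 := by positivity
  have ha' : a / 2 < π := by
    rw [div_lt_iff₀ two_pos, div_lt_iff₀ hN]
    have : (d : ℝ) < 2 * N := by exact_mod_cast hdN
    nlinarith [pi_pos]
  have hsin : sin (a / 2) ≠ 0 := (sin_pos_of_pos_of_lt_pi ha ha').ne'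
  have hNa : N * a / 2 = d * π / 2 := by simp only [a]; field_simp
  have hsincos : sin (d * π / 2) * cos (d * π / 2) = 0 := by
    have := sin_two_mul (d * π / 2)
    rw [show 2 * (d * π / 2) = d * π by ring, sin_nat_mul_pi] at this
    linarith
  -- the cross term of `cos ((N - 1) a / 2) = cos (d π / 2 - a / 2)` carries `sin (d π) = 0`
  have h := sin_mul_sum_cos N a 0
  simp only [add_zero, hNa, show ((N : ℝ) - 1) * a / 2 = d * π / 2 - a / 2 by rw [← hNa]; ring,
    cos_sub] at h
  apply mul_left_cancel₀ hsin
  simp only [mul_comm _ a]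
  linear_combination h + cos (a / 2) * hsincos

theorem sum_range_sin_mul_sin_mul_pi_div {N x : ℕ} (hx : 0 < x) (hxN : x < N) :
    ∑ j ∈ range N, sin (j * (π / N)) * sin (x * (j * (π / N))) =
      if x = 1 then (N : ℝ) / 2 else 0 := by
  obtain ⟨y, rfl⟩ : ∃ y, x = y + 1 := ⟨x - 1, by omega⟩
  have hprod (j : ℕ) : sin (j * (π / N)) * sin ((y + 1 : ℕ) * (j * (π / N))) =
      (cos (j * (y * π / N)) - cos (j * ((y + 2 : ℕ) * π / N))) / 2 := by
    have h := two_mul_sin_mul_sin ((y + 1 : ℕ) * (j * (π / N))) (j * (π / N))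
    rw [show ((y + 1 : ℕ) : ℝ) * (j * (π / N)) - j * (π / N) = j * (y * π / N) by push_cast; ring,
      show ((y + 1 : ℕ) : ℝ) * (j * (π / N)) + j * (π / N) = j * ((y + 2 : ℕ) * π / N) by
        push_cast; ring] at h
    linarith
  rw [sum_congr rfl fun j _ => hprod j, ← sum_div, sum_sub_distrib,
    sum_range_cos_mul_pi_div (d := y + 2) (by omega) (by omega)]
  rcases Nat.eq_zero_or_pos y with rfl | hy
  · simp
  · rw [sum_range_cos_mul_pi_div hy (by omega), if_neg (by omega)]
    push_cast
    rw [add_mul, add_div, show 2 * π / 2 = π by ring, sin_add_pi, neg_sq, sub_self, zero_div]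

/-- The eigenvector expansion of walk counts on `{1, …, N - 1}`: the term `j = 0` vanishes, and
positions are shifted by one so that the boundary sits at `0` and `N`. -/
noncomputable def stripSpectralSum (N m x : ℕ) : ℝ :=
  2 / N * ∑ j ∈ range N,
    sin (j * (π / N)) * sin (x * (j * (π / N))) * (2 * cos (j * (π / N))) ^ m

theorem stripSpectralSum_zero_left {N x : ℕ} (hx : 0 < x) (hxN : x < N) :
    stripSpectralSum N 0 x = if x = 1 then 1 else 0 := by
  have hN : (N : ℝ) ≠ 0 := by exact_mod_cast (show N ≠ 0 by omega)
  simp only [stripSpectralSum, pow_zero, mul_one, sum_range_sin_mul_sin_mul_pi_div hx hxN]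
  split_ifs
  · field_simp
  · simp

theorem stripSpectralSum_zero_right (N m : ℕ) : stripSpectralSum N m 0 = 0 := by
  simp [stripSpectralSum]

theorem stripSpectralSum_self (N m : ℕ) : stripSpectralSum N m N = 0 := by
  rcases Nat.eq_zero_or_pos N with rfl | hN
  · simp [stripSpectralSum]
  have hN' : (N : ℝ) ≠ 0 := by exact_mod_cast hN.ne'
  refine mul_eq_zero_of_right _ (sum_eq_zero fun j _ => ?_)
  rw [show (N : ℝ) * (j * (π / N)) = j * π by field_simp, sin_nat_mul_pi, mul_zero, zero_mul]

theorem stripSpectralSum_succ (N m x : ℕ) :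
    stripSpectralSum N (m + 1) (x + 1) = stripSpectralSum N m (x + 2) + stripSpectralSum N m x := by
  simp only [stripSpectralSum, ← mul_add, ← sum_add_distrib]
  congr 1
  refine sum_congr rfl fun j _ => ?_
  have h := two_mul_sin_mul_cos ((x + 1 : ℕ) * (j * (π / N))) (j * (π / N))
  rw [show ((x + 1 : ℕ) : ℝ) * (j * (π / N)) - j * (π / N) = x * (j * (π / N)) by push_cast; ring,
    show ((x + 1 : ℕ) : ℝ) * (j * (π / N)) + j * (π / N) = (x + 2 : ℕ) * (j * (π / N)) by
      push_cast; ring] at h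
  rw [pow_succ]
  linear_combination (sin (j * (π / N)) * (2 * cos (j * (π / N))) ^ m) * h

def IsBoundedWalk (t m : ℕ) (a : ℕ → ℕ) : Prop :=
  a 0 = 0 ∧ (∀ i < m, a (i + 1) = a i + 1 ∨ a i = a (i + 1) + 1) ∧ (∀ i, a i ≤ t) ∧
    ∀ i, m < i → a i = 0

noncomputable def boundedWalkCount (t m h : ℕ) : ℕ :=
  Nat.card {a // IsBoundedWalk t m a ∧ a m = h}

namespace IsBoundedWalk

variable {t m h : ℕ} {a : ℕ → ℕ}

instance finite (p : (ℕ → ℕ) → Prop) : Finite {a // IsBoundedWalk t m a ∧ p a} := by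
  refine Finite.of_injective
    (fun a i => (⟨a.1 i, Nat.lt_succ_of_le (a.2.1.2.2.1 i)⟩ : Fin (t + 1)) : _ → Fin (m + 1) → _) ?_
  intro a b hab
  ext i
  rcases le_or_gt i m with hi | hi
  · simpa using congrFun hab ⟨i, Nat.lt_succ_of_le hi⟩
  · rw [a.2.1.2.2.2 i hi, b.2.1.2.2.2 i hi]

theorem truncate (ha : IsBoundedWalk t (m + 1) a) :
    IsBoundedWalk t m (Function.update a (m + 1) 0) := by
  obtain ⟨h0, hstep, hle, hpad⟩ := ha
  refine ⟨by simpa using h0, fun i hi => ?_, fun i => ?_, fun i hi => ?_⟩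
  · rw [Function.update_of_ne (by omega), Function.update_of_ne (by omega)]
    exact hstep i (by omega)
  · rcases eq_or_ne i (m + 1) with rfl | hi
    · simp
    · simpa [Function.update_apply, hi] using hle i
  · rcases eq_or_ne i (m + 1) with rfl | hi'
    · simp
    · simpa [Function.update_apply, hi'] using hpad i (by omega)

theorem extend (ha : IsBoundedWalk t m a) (hh : h ≤ t) (hstep : a m = h + 1 ∨ a m + 1 = h) :
    IsBoundedWalk t (m + 1) (Function.update a (m + 1) h) := by
  obtain ⟨h0, hstep', hle, hpad⟩ := ha
  refine ⟨by simpa using h0, fun i hi => ?_, fun i => ?_, fun i hi => ?_⟩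
  · rcases eq_or_ne i m with rfl | him
    · rw [Function.update_self, Function.update_of_ne (by omega)]
      omega
    · rw [Function.update_of_ne (by omega), Function.update_of_ne (by omega)]
      exact hstep' i (by omega)
  · rcases eq_or_ne i (m + 1) with rfl | hi
    · simpa using hh
    · simpa [Function.update_apply, hi] using hle i
  · simpa [Function.update_apply, show i ≠ m + 1 by omega] using hpad i (by omega)

end IsBoundedWalk

def boundedWalkSuccEquiv {t m h : ℕ} (hh : h ≤ t) :
    {a // IsBoundedWalk t (m + 1) a ∧ a (m + 1) = h} ≃
      {b // IsBoundedWalk t m b ∧ (b m = h + 1 ∨ b m + 1 = h)} where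
  toFun a := ⟨Function.update a.1 (m + 1) 0, a.2.1.truncate, by
    have := a.2.1.2.1 m (by omega)
    rw [Function.update_of_ne (by omega)]
    omega⟩
  invFun b := ⟨Function.update b.1 (m + 1) h, b.2.1.extend hh b.2.2, by simp⟩
  left_inv a := by
    ext1
    simp only [Function.update_idem]
    exact Function.update_eq_self_iff.2 a.2.2.symm
  right_inv b := by
    ext1
    simp only [Function.update_idem]
    exact Function.update_eq_self_iff.2 (b.2.1.2.2.2 _ (by omega)).symm

theorem boundedWalkCount_succ {t m h : ℕ} (hh : h ≤ t) :
    boundedWalkCount t (m + 1) h =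
      boundedWalkCount t m (h + 1) + Nat.card {b // IsBoundedWalk t m b ∧ b m + 1 = h} := by
  classical
  simp only [boundedWalkCount]
  rw [Nat.card_congr (boundedWalkSuccEquiv hh), ← Nat.card_sum]
  refine Nat.card_congr ((Equiv.subtypeEquivRight fun b => and_or_left).trans
    (subtypeOrEquiv _ _ ?_))
  simp only [Pi.disjoint_iff, Prop.disjoint_iff]
  omega

theorem boundedWalkCount_zero_left (t h : ℕ) :
    boundedWalkCount t 0 h = if h = 0 then 1 else 0 := by
  have hconst {a : ℕ → ℕ} (ha : IsBoundedWalk t 0 a) : a = 0 := by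
    ext i
    rcases Nat.eq_zero_or_pos i with rfl | hi
    exacts [ha.1, ha.2.2.2 i hi]
  split_ifs with h0
  · subst h0
    refine Nat.card_eq_one_iff_unique.2 ⟨⟨fun a b => Subtype.ext ?_⟩, ⟨⟨0, ?_, rfl⟩⟩⟩
    · rw [hconst a.2.1, hconst b.2.1]
    · exact ⟨rfl, by simp, fun _ => Nat.zero_le t, fun _ _ => rfl⟩
  · refine Nat.card_eq_zero.2 (Or.inl ⟨fun a => h0 ?_⟩)
    rw [← a.2.2, hconst a.2.1, Pi.zero_apply]

theorem boundedWalkCount_of_lt {t m h : ℕ} (hth : t < h) : boundedWalkCount t m h = 0 :=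
  Nat.card_eq_zero.2 (Or.inl ⟨fun a => by have := a.2.1.2.2.1 m; omega⟩)

theorem boundedWalkCount_eq_stripSpectralSum {t h : ℕ} (m : ℕ) (hh : h ≤ t) :
    (boundedWalkCount t m h : ℝ) = stripSpectralSum (t + 2) m (h + 1) := by
  induction m generalizing h with
  | zero =>
    rw [boundedWalkCount_zero_left, stripSpectralSum_zero_left (by omega) (by omega)]
    simp
  | succ m ih =>
    have hup : (boundedWalkCount t m (h + 1) : ℝ) = stripSpectralSum (t + 2) m (h + 2) := by
      rcases Nat.lt_or_ge h t with hht | hht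
      · exact ih hht
      · rw [boundedWalkCount_of_lt (by omega), show h + 2 = t + 2 by omega,
          stripSpectralSum_self, Nat.cast_zero]
    rw [boundedWalkCount_succ hh, stripSpectralSum_succ, Nat.cast_add, hup]
    congr 1
    rcases h with _ | h
    · rw [stripSpectralSum_zero_right, Nat.card_eq_zero.2 (Or.inl ⟨fun b => by omega⟩),
        Nat.cast_zero]
    · rw [← ih (by omega), boundedWalkCount]
      exact congrArg _ (Nat.card_congr (Equiv.subtypeEquivRight fun b => by simp))

theorem A_eq_boundedWalkCount {n : ℕ} (t : ℕ) (hn : 0 < n) :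
    A n t = boundedWalkCount t (2 * n) 0 := by
  rw [A, if_neg hn.ne', boundedWalkCount]
  refine Nat.card_congr (Equiv.subtypeEquivRight fun a => ?_)
  constructor
  · rintro ⟨⟨h1, h2n, hstep, h0, hpad⟩, hle⟩
    refine ⟨⟨h0, fun i hi => ?_, hle, hpad⟩, h2n⟩
    rcases Nat.eq_zero_or_pos i with rfl | hi0
    · exact Or.inl (by rw [h1, h0])
    · exact hstep i hi0 hi
  · rintro ⟨⟨h0, hstep, hle, hpad⟩, h2n⟩
    have h1 : a 1 = 1 := by
      have := hstep 0 (by omega)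
      rw [zero_add] at this
      omega
    exact ⟨⟨h1, h2n, fun i _ hi => hstep i hi, h0, hpad⟩, hle⟩

theorem abs_cos_lt_cos {θ x : ℝ} (hθ : 0 ≤ θ) (hθx : θ < x) (hxθ : x < π - θ) :
    |cos x| < cos θ := by
  refine abs_lt.2 ⟨?_, cos_lt_cos_of_nonneg_of_le_pi hθ (by linarith) hθx⟩
  have := cos_lt_cos_of_nonneg_of_le_pi hθ (by linarith) (show θ < π - x by linarith)
  rw [cos_pi_sub] at this
  linarith

theorem pi_div_natCast_mem_Ioo {N : ℕ} (hN : 3 ≤ N) : π / N ∈ Set.Ioo 0 (π / 2) := by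
  have hN' : (3 : ℝ) ≤ N := by exact_mod_cast hN
  refine ⟨by positivity, ?_⟩
  rw [div_lt_div_iff_of_pos_left pi_pos (by positivity) two_pos]
  linarith

theorem tendsto_sum_sin_sq_mul_cos_sq_pow {N : ℕ} (hN : 3 ≤ N) :
    Tendsto (fun n : ℕ => ∑ j ∈ range N,
      (sin (j * (π / N)) / sin (π / N)) ^ 2 * ((cos (j * (π / N)) / cos (π / N)) ^ 2) ^ n)
      atTop (𝓝 2) := by
  obtain ⟨hθ0, hθ2⟩ := pi_div_natCast_mem_Ioo hN
  set θ := π / N with hθ_def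
  have hsin : sin θ ≠ 0 := (sin_pos_of_pos_of_lt_pi hθ0 (by linarith [pi_pos])).ne'
  have hcos : 0 < cos θ := cos_pos_of_mem_Ioo ⟨by linarith, hθ2⟩
  have hNθ : (N : ℝ) * θ = π := by rw [hθ_def]; field_simp
  have hterm : ∀ j ∈ range N, Tendsto
      (fun n : ℕ => (sin (j * θ) / sin θ) ^ 2 * ((cos (j * θ) / cos θ) ^ 2) ^ n) atTop
      (𝓝 ((if j = 1 then 1 else 0) + if j = N - 1 then 1 else 0)) := by
    intro j hj
    rw [mem_range] at hj
    rcases Nat.lt_or_ge j 2 with hj2 | hj2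
    · interval_cases j
      · simp [show 0 ≠ N - 1 by omega]
      · simp [show 1 ≠ N - 1 by omega, div_self hsin, div_self hcos.ne']
    rcases eq_or_ne j (N - 1) with rfl | hjN
    · have hangle : ((N - 1 : ℕ) : ℝ) * θ = π - θ := by
        rw [Nat.cast_sub (by omega), sub_mul, hNθ, Nat.cast_one, one_mul]
      simp [show N - 1 ≠ 1 by omega, hangle, div_self hsin, neg_div, div_self hcos.ne']
    · have hj2' : (2 : ℝ) ≤ j := by exact_mod_cast hj2
      have hjN' : (j : ℝ) + 1 < N := by exact_mod_cast (show j + 1 < N by omega)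
      have hratio : (cos (j * θ) / cos θ) ^ 2 < 1 := by
        rw [sq_lt_one_iff_abs_lt_one, abs_div, abs_of_pos hcos, div_lt_one hcos]
        exact abs_cos_lt_cos hθ0.le (by nlinarith) (by nlinarith)
      rw [if_neg (by omega), if_neg hjN, add_zero]
      simpa using (tendsto_pow_atTop_nhds_zero_of_lt_one (sq_nonneg _) hratio).const_mul
        ((sin (j * θ) / sin θ) ^ 2)
  have hlim :
      ∑ j ∈ range N, ((if j = 1 then (1 : ℝ) else 0) + if j = N - 1 then 1 else 0) = 2 := by
    rw [sum_add_distrib, sum_ite_eq', sum_ite_eq', if_pos (mem_range.2 (by omega)),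
      if_pos (mem_range.2 (by omega))]
    norm_num
  simpa only [hlim] using tendsto_finsetSum (range N) hterm

theorem tendsto_stripSpectralSum_div {N : ℕ} (hN : 3 ≤ N) :
    Tendsto (fun n : ℕ => stripSpectralSum N (2 * n) 1 /
      (1 / N * 4 ^ (n + 1) * sin (π / N) ^ 2 * cos (π / N) ^ (2 * n))) atTop (𝓝 1) := by
  obtain ⟨hθ0, hθ2⟩ := pi_div_natCast_mem_Ioo hN
  have hsin : sin (π / N) ≠ 0 := (sin_pos_of_pos_of_lt_pi hθ0 (by linarith [pi_pos])).ne'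
  have hcos : cos (π / N) ≠ 0 := (cos_pos_of_mem_Ioo ⟨by linarith, hθ2⟩).ne'
  have hlim := (tendsto_sum_sin_sq_mul_cos_sq_pow hN).div_const 2
  rw [div_self two_ne_zero] at hlim
  refine hlim.congr fun n => ?_
  rw [stripSpectralSum, sum_div, mul_sum, sum_div]
  refine sum_congr rfl fun j _ => ?_
  simp only [pow_mul, div_pow, mul_pow, Nat.cast_one, one_mul]
  field_simp
  ring

/-- asymptotics of A (n, k-1). -/
theorem stmt13 (k : ℕ) (hk : 2 ≤ k) :
    Filter.Tendsto (fun n : ℕ =>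
        (A n (k-1) : ℝ) /
          ((1 / (k+1)) * 4^(n+1) * Real.sin (Real.pi / (k+1))^2
            * Real.cos (Real.pi / (k+1))^(2*n)))
      Filter.atTop (nhds 1) := by
  have hlim := tendsto_stripSpectralSum_div (N := k + 1) (by omega)
  push_cast at hlim
  refine hlim.congr' ((eventually_gt_atTop 0).mono fun n hn => ?_)
  dsimp only
  rw [A_eq_boundedWalkCount _ hn, boundedWalkCount_eq_stripSpectralSum _ (Nat.zero_le _),
    show k - 1 + 2 = k + 1 by omega]
end

section
/- For every fixed k ≥ 1, lim_{n→∞} A_{n,k}/C_n = 0: the proportion of Dyck paths of semilength n with height at most k tends to 0. -/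
open Finset Real Filter

/-! A path of height at most `k` is determined by its up/down pattern and never makes `k + 1`
consecutive up-steps. Cutting its `2n` steps into `m = ⌈2n / (k + 1)⌉` blocks of length `k + 1`
gives `A n k ≤ (2^(k+1) - 1)^m`, which is exponentially smaller than `2^(2n) ≈ 2^((k+1) m)`,
whereas `C n ≥ 4^n / (2n(n+1))` loses only a polynomial factor. -/

lemma IsDyckSeq.ext {n : ℕ} {a b : ℕ → ℕ} (ha : IsDyckSeq n a) (hb : IsDyckSeq n b)
    (h : ∀ i < 2 * n, (a (i + 1) = a i + 1 ↔ b (i + 1) = b i + 1)) : a = b := by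
  obtain ⟨ha1, -, hastep, ha0, hapad⟩ := ha
  obtain ⟨hb1, -, hbstep, hb0, hbpad⟩ := hb
  funext i
  induction i with
  | zero => rw [ha0, hb0]
  | succ i ih =>
    rcases Nat.lt_or_ge (2 * n) (i + 1) with hi | hi
    · rw [hapad _ hi, hbpad _ hi]
    rcases Nat.eq_zero_or_pos i with rfl | hi0
    · rw [ha1, hb1]
    have hup := h i (by omega)
    rcases hastep i hi0 (by omega) with ha' | ha' <;>
      rcases hbstep i hi0 (by omega) with hb' | hb' <;>
      simp only [ha', hb', true_iff, iff_true] at hup <;> omega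

lemma exists_not_up_of_forall_le {a : ℕ → ℕ} {k : ℕ} (ha : ∀ i, a i ≤ k) (s : ℕ) :
    ∃ l < k + 1, a (s + l + 1) ≠ a (s + l) + 1 := by
  by_contra! hup
  have hclimb : ∀ l ≤ k + 1, a (s + l) = a s + l := by
    intro l hl
    induction l with
    | zero => rfl
    | succ l ih => rw [← add_assoc, hup l (by omega), ih (by omega), add_assoc]
  have := ha (s + (k + 1))
  rw [hclimb (k + 1) le_rfl] at this
  omega

lemma A_le_pow {n k m : ℕ} (hm : 2 * n ≤ (k + 1) * m) : A n k ≤ (2 ^ (k + 1) - 1) ^ m := by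
  unfold A
  split_ifs
  · exact Nat.one_le_pow _ _ (Nat.sub_pos_of_lt (Nat.one_lt_two_pow k.succ_ne_zero))
  let Block := {s : Fin (k + 1) → Bool // s ≠ fun _ => true}
  let encode : {a : ℕ → ℕ // IsDyckSeq n a ∧ ∀ i, a i ≤ k} → (Fin m → Block) :=
    fun a j => ⟨fun l => decide (a.1 ((k + 1) * j + l + 1) = a.1 ((k + 1) * j + l) + 1), by
      obtain ⟨l, hl, hdown⟩ := exists_not_up_of_forall_le a.2.2 ((k + 1) * j)
      exact fun h => hdown (by simpa using congrFun h ⟨l, hl⟩)⟩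
  have hencode : Function.Injective encode := by
    intro a b hab
    refine Subtype.ext (a.2.1.ext b.2.1 fun i hi => ?_)
    have hj : i / (k + 1) < m := by
      rw [Nat.div_lt_iff_lt_mul (by omega), mul_comm]
      omega
    have := congrFun (congrArg Subtype.val (congrFun hab ⟨i / (k + 1), hj⟩))
      ⟨i % (k + 1), Nat.mod_lt _ (by omega)⟩
    simpa only [encode, Nat.div_add_mod, decide_eq_decide] using this
  calc Nat.card {a : ℕ → ℕ // IsDyckSeq n a ∧ ∀ i, a i ≤ k}
      ≤ Nat.card (Fin m → Block) := Nat.card_le_card_of_injective encode hencode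
    _ = (2 ^ (k + 1) - 1) ^ m := by
      rw [Nat.card_fun, Nat.card_eq_fintype_card (α := Fin m), Fintype.card_fin,
        Nat.card_eq_fintype_card]
      have := Set.card_ne_eq (fun _ => true : Fin (k + 1) → Bool)
      simp_all [Block]

lemma succ_mul_C (n : ℕ) : (n + 1) * C n = n.centralBinom :=
  Nat.mul_div_cancel' (Nat.succ_dvd_centralBinom n)

lemma C_pos (n : ℕ) : 0 < C n :=
  Nat.pos_of_mul_pos_left ((succ_mul_C n).symm ▸ Nat.centralBinom_pos n)

lemma four_pow_le_mul_C {n : ℕ} (hn : 0 < n) : 4 ^ n ≤ 2 * n * (n + 1) * C n := by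
  rw [mul_assoc, succ_mul_C]
  exact Nat.four_pow_le_two_mul_self_mul_centralBinom n hn

lemma A_mul_pow_le {n k m : ℕ} (hn : 0 < n) (hm : 2 * n ≤ (k + 1) * m)
    (hm' : (k + 1) * m ≤ 2 * n + k) :
    A n k * (2 ^ (k + 1)) ^ m ≤ 2 ^ k * ((k + 1) * m) ^ 2 * (2 ^ (k + 1) - 1) ^ m * C n := by
  calc A n k * (2 ^ (k + 1)) ^ m
      = A n k * 2 ^ ((k + 1) * m) := by rw [pow_mul]
    _ ≤ A n k * 2 ^ (2 * n + k) := by gcongr; norm_num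
    _ = 2 ^ k * (A n k * 4 ^ n) := by rw [pow_add, pow_mul]; ring
    _ ≤ 2 ^ k * ((2 ^ (k + 1) - 1) ^ m * (2 * n * (n + 1) * C n)) := by
      gcongr
      exacts [A_le_pow hm, four_pow_le_mul_C hn]
    _ ≤ 2 ^ k * ((2 ^ (k + 1) - 1) ^ m * (((k + 1) * m) ^ 2 * C n)) := by
      have : 2 * n * (n + 1) ≤ ((k + 1) * m) ^ 2 := by nlinarith
      gcongr
    _ = 2 ^ k * ((k + 1) * m) ^ 2 * (2 ^ (k + 1) - 1) ^ m * C n := by ring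

lemma A_div_C_le {n k m : ℕ} (hn : 0 < n) (hm : 2 * n ≤ (k + 1) * m)
    (hm' : (k + 1) * m ≤ 2 * n + k) :
    (A n k : ℝ) / C n ≤
      2 ^ k * (k + 1) ^ 2 * ((m : ℝ) ^ 2 * (((2 ^ (k + 1) - 1 : ℕ) : ℝ) / 2 ^ (k + 1)) ^ m) := by
  have h : (A n k : ℝ) * (2 ^ (k + 1)) ^ m ≤
      2 ^ k * ((k + 1) * m) ^ 2 * ((2 ^ (k + 1) - 1 : ℕ) : ℝ) ^ m * C n := by
    exact_mod_cast A_mul_pow_le hn hm hm'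
  rw [div_le_iff₀ (by exact_mod_cast C_pos n), div_pow,
    ← mul_le_mul_iff_of_pos_right (by positivity : (0 : ℝ) < (2 ^ (k + 1)) ^ m)]
  refine h.trans_eq ?_
  field_simp

theorem stmt15_general (k : ℕ) :
    Filter.Tendsto (fun n : ℕ => (A n k : ℝ) / C n) Filter.atTop (nhds 0) := by
  set ρ : ℝ := ((2 ^ (k + 1) - 1 : ℕ) : ℝ) / 2 ^ (k + 1)
  have hρ : |ρ| < 1 := by
    rw [abs_of_nonneg (by positivity), div_lt_one (by positivity)]
    exact_mod_cast Nat.sub_lt (Nat.two_pow_pos _) one_pos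
  have hceil : Tendsto (fun n : ℕ => (2 * n + k) / (k + 1)) atTop atTop :=
    tendsto_atTop_mono (fun n => Nat.div_le_div_right (by omega))
      (Nat.tendsto_div_const_atTop (Nat.succ_ne_zero k))
  have hbound := ((tendsto_pow_const_mul_const_pow_of_abs_lt_one 2 hρ).comp hceil).const_mul
    ((2 : ℝ) ^ k * (k + 1) ^ 2)
  rw [mul_zero] at hbound
  refine squeeze_zero' (.of_forall fun n => by positivity) ?_ hbound
  filter_upwards [eventually_gt_atTop 0] with n hn
  have hlo := Nat.lt_div_mul_add (a := 2 * n + k) (b := k + 1) k.succ_pos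
  have hhi := Nat.div_mul_le_self (2 * n + k) (k + 1)
  exact A_div_C_le hn (by linarith) (by linarith)

theorem stmt15 (k : ℕ) (hk : 1 ≤ k) :
    Filter.Tendsto (fun n : ℕ => (A n k : ℝ) / C n) Filter.atTop (nhds 0) :=
  stmt15_general k
end
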